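/- Let x̄(C,ρ) and ȳ(C,ρ) denote the unique maximisers of F(α,β;ρ) with C = α−β ≥ 0. Then: (a) for every C ≥ 0, as ρ ↑ 1, x̄(C,ρ) → 5/2 and ȳ(C,ρ) → 10/(5 − e^{−C}); (b) as ρ ↓ 0, if 0 ≤ C < log 5 then x̄(C,ρ) → 10 e^{−C}/(5 e^{−C} − 1) and ȳ(C,ρ) → 5/2, while if C ≥ log 5 then x̄(C,ρ) → ∞ and ȳ(C,ρ) → 2/(1 − e^{−C}); (c) for every fixed ρ ∈ (0,1), as C → ∞, x̄(C,ρ) → ∞ and ȳ(C,ρ) → 2. -/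
import Mathlib

open Filter Topology

/-- The system of equations (in terms of `C = α−β` and `ρ`) characterising the
maximisers `(x̄(C,ρ), ȳ(C,ρ))` of `F(α,β;ρ)`:
`2 < x`, `2 < y`, `log 2 + ρ log(x−2) + (1−ρ) log(y−2) = 0` and
`C + log(x(y−2)/(y(x−2))) = 0`. -/
def solveSysC (C ρ x y : ℝ) : Prop :=
  2 < x ∧ 2 < y ∧
  Real.log 2 + ρ * Real.log (x - 2) + (1 - ρ) * Real.log (y - 2) = 0 ∧
  C + Real.log (x * (y - 2) / (y * (x - 2))) = 0

private lemma sys_facts {C ρ x y : ℝ} (h : solveSysC C ρ x y) :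
    0 < x - 2 ∧ 0 < y - 2 ∧
    ρ * Real.log (x - 2) + (1 - ρ) * Real.log (y - 2) = -Real.log 2 ∧
    (y - 2) * ((1 - Real.exp (-C)) * (x - 2) + 2) = 2 * Real.exp (-C) * (x - 2) := by
  obtain ⟨hx, hy, hE1, hE2⟩ := h
  have ha : 0 < x - 2 := by linarith
  have hb : 0 < y - 2 := by linarith
  refine ⟨ha, hb, by linarith, ?_⟩
  have hx0 : 0 < x := by linarith
  have hy0 : 0 < y := by linarith
  have hz : 0 < x * (y - 2) / (y * (x - 2)) := by positivity
  have hlog : Real.log (x * (y - 2) / (y * (x - 2))) = -C := by linarith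
  have hzz : x * (y - 2) / (y * (x - 2)) = Real.exp (-C) := by
    rw [← hlog, Real.exp_log hz]
  rw [div_eq_iff (by positivity : (y * (x - 2)) ≠ 0)] at hzz
  linear_combination hzz

private lemma derived_facts {a b k ρ : ℝ} (ha : 0 < a) (hb : 0 < b)
    (hk0 : 0 < k) (hk1 : k ≤ 1) (h0 : 0 < ρ) (h1 : ρ < 1)
    (E1 : ρ * Real.log a + (1 - ρ) * Real.log b = -Real.log 2)
    (E2 : b * ((1 - k) * a + 2) = 2 * k * a) :
    -Real.log 2 ≤ Real.log a ∧ Real.log b ≤ -Real.log 2 ∧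
    1 / 2 ≤ a ∧ b ≤ 1 / 2 ∧ 0 < 2 * k - (1 - k) * b ∧
    a * (2 * k - (1 - k) * b) = 2 * b := by
  have hba : b ≤ a := by
    nlinarith [mul_nonneg (sub_nonneg.2 hk1) ha.le,
      mul_nonneg (mul_nonneg (sub_nonneg.2 hk1) ha.le) hb.le]
  have hlog : Real.log b ≤ Real.log a := Real.log_le_log hb hba
  have hla : -Real.log 2 ≤ Real.log a := by nlinarith [hlog, h0, h1]
  have hlb : Real.log b ≤ -Real.log 2 := by nlinarith [hlog, h0, h1]
  have ha2 : 1 / 2 ≤ a := by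
    have h' := Real.exp_le_exp.2 hla
    rw [Real.exp_log ha, Real.exp_neg, Real.exp_log two_pos] at h'
    rw [one_div]; exact h'
  have hb2 : b ≤ 1 / 2 := by
    have h' := Real.exp_le_exp.2 hlb
    rw [Real.exp_log hb, Real.exp_neg, Real.exp_log two_pos] at h'
    rw [one_div]; exact h'
  have key : a * (2 * k - (1 - k) * b) = 2 * b := by linear_combination -E2
  have hd : 0 < 2 * k - (1 - k) * b := by nlinarith [key, ha, hb]
  exact ⟨hla, hlb, ha2, hb2, hd, key⟩

private lemma part_a (X Y : ℝ → ℝ → ℝ)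
    (hXY : ∀ C ρ : ℝ, 0 ≤ C → 0 < ρ → ρ < 1 → solveSysC C ρ (X C ρ) (Y C ρ))
    (C : ℝ) (hC : 0 ≤ C) :
    Tendsto (X C) (𝓝[<] 1) (𝓝 (5 / 2)) ∧
    Tendsto (Y C) (𝓝[<] 1) (𝓝 (10 / (5 - Real.exp (-C)))) := by
  set k := Real.exp (-C) with hkdef
  have hk0 : 0 < k := Real.exp_pos _
  have hk1 : k ≤ 1 := Real.exp_le_one_iff.2 (by linarith)
  have hmem : Set.Ioo (0:ℝ) 1 ∈ 𝓝[<] (1:ℝ) :=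
    Ioo_mem_nhdsLT_of_mem (by constructor <;> norm_num)
  have key : ∀ ρ : ℝ, 0 < ρ → ρ < 1 →
      0 < X C ρ - 2 ∧ 0 < Y C ρ - 2 ∧
      ρ * Real.log (X C ρ - 2) + (1 - ρ) * Real.log (Y C ρ - 2) = -Real.log 2 ∧
      (Y C ρ - 2) * ((1 - k) * (X C ρ - 2) + 2) = 2 * k * (X C ρ - 2) :=
    fun ρ h0 h1 => sys_facts (hXY C ρ hC h0 h1)
  -- squeeze for log (X - 2)
  have hlo : ∀ᶠ ρ in 𝓝[<] (1:ℝ), -Real.log 2 ≤ Real.log (X C ρ - 2) := by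
    filter_upwards [hmem] with ρ hρ
    obtain ⟨ha, hb, E1, E2⟩ := key ρ hρ.1 hρ.2
    exact (derived_facts ha hb hk0 hk1 hρ.1 hρ.2 E1 E2).1
  have hhi : ∀ᶠ ρ in 𝓝[<] (1:ℝ),
      Real.log (X C ρ - 2) ≤ (-Real.log 2 - (1 - ρ) * Real.log (2 * k / 5)) / ρ := by
    filter_upwards [hmem] with ρ hρ
    obtain ⟨ha, hb, E1, E2⟩ := key ρ hρ.1 hρ.2
    obtain ⟨hla, hlb, ha2, hb2, hd, hkey⟩ := derived_facts ha hb hk0 hk1 hρ.1 hρ.2 E1 E2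
    have h5 : (1 - k) * (X C ρ - 2) + 2 ≤ 5 * (X C ρ - 2) := by
      nlinarith [mul_nonneg hk0.le (by linarith : (0:ℝ) ≤ X C ρ - 2 - 1/2)]
    have hle : 2 * k * (X C ρ - 2) ≤ (Y C ρ - 2) * (5 * (X C ρ - 2)) := by
      calc 2 * k * (X C ρ - 2) = (Y C ρ - 2) * ((1 - k) * (X C ρ - 2) + 2) := E2.symm
      _ ≤ (Y C ρ - 2) * (5 * (X C ρ - 2)) := by
          exact mul_le_mul_of_nonneg_left h5 hb.le
    have hblo : 2 * k / 5 ≤ Y C ρ - 2 := by nlinarith [hle, ha]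
    have hloglb : Real.log (2 * k / 5) ≤ Real.log (Y C ρ - 2) :=
      Real.log_le_log (by positivity) hblo
    have hρ1 : ρ < 1 := hρ.2
    rw [le_div_iff₀ hρ.1]
    linarith [mul_le_mul_of_nonneg_left hloglb (by linarith : (0:ℝ) ≤ 1 - ρ), E1]
  have hup : Tendsto (fun ρ : ℝ => (-Real.log 2 - (1 - ρ) * Real.log (2 * k / 5)) / ρ)
      (𝓝[<] (1:ℝ)) (𝓝 (-Real.log 2)) := by
    have h1t : Tendsto (fun ρ : ℝ => (-Real.log 2 - (1 - ρ) * Real.log (2 * k / 5)) / ρ)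
        (𝓝 (1:ℝ)) (𝓝 ((-Real.log 2 - (1 - 1) * Real.log (2 * k / 5)) / 1)) :=
      Tendsto.div
        (tendsto_const_nhds.sub ((tendsto_const_nhds.sub tendsto_id).mul tendsto_const_nhds))
        tendsto_id one_ne_zero
    have hv : (-Real.log 2 - (1 - 1) * Real.log (2 * k / 5)) / 1 = -Real.log 2 := by norm_num
    rw [hv] at h1t
    exact h1t.mono_left nhdsWithin_le_nhds
  have hlogat : Tendsto (fun ρ => Real.log (X C ρ - 2)) (𝓝[<] (1:ℝ)) (𝓝 (-Real.log 2)) :=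
    tendsto_of_tendsto_of_tendsto_of_le_of_le' tendsto_const_nhds hup hlo hhi
  have hA : Tendsto (fun ρ => X C ρ - 2) (𝓝[<] (1:ℝ)) (𝓝 (1/2)) := by
    have h2 := (Real.continuous_exp.tendsto _).comp hlogat
    have hval : Real.exp (-Real.log 2) = 1/2 := by
      rw [Real.exp_neg, Real.exp_log two_pos]; norm_num
    rw [hval] at h2
    refine h2.congr' ?_
    filter_upwards [hmem] with ρ hρ
    obtain ⟨ha, _, _, _⟩ := key ρ hρ.1 hρ.2
    exact Real.exp_log ha
  constructor
  · have h3 := hA.add_const 2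
    have h52 : (1:ℝ)/2 + 2 = 5/2 := by norm_num
    rw [h52] at h3
    exact h3.congr (fun ρ => by ring)
  · have hden : (0:ℝ) < (1 - k) * (1/2) + 2 := by nlinarith
    have hBfun : Tendsto (fun ρ => 2 * k * (X C ρ - 2) / ((1 - k) * (X C ρ - 2) + 2) + 2)
        (𝓝[<] (1:ℝ)) (𝓝 (2 * k * (1/2) / ((1 - k) * (1/2) + 2) + 2)) := by
      apply Tendsto.add_const
      exact Tendsto.div (tendsto_const_nhds.mul hA)
        ((tendsto_const_nhds.mul hA).add_const 2) hden.ne'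
    have hval : 2 * k * (1/2) / ((1 - k) * (1/2) + 2) + 2 = 10 / (5 - k) := by
      have h5k : (0:ℝ) < 5 - k := by linarith
      rw [div_add' _ _ _ hden.ne', div_eq_div_iff hden.ne' h5k.ne']
      ring
    rw [hval] at hBfun
    refine hBfun.congr' ?_
    filter_upwards [hmem] with ρ hρ
    obtain ⟨ha, hb, E1, E2⟩ := key ρ hρ.1 hρ.2
    have hden2 : (0:ℝ) < (1 - k) * (X C ρ - 2) + 2 := by
      nlinarith [mul_nonneg (sub_nonneg.2 hk1) ha.le]
    have heq : 2 * k * (X C ρ - 2) / ((1 - k) * (X C ρ - 2) + 2) = Y C ρ - 2 := by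
      rw [div_eq_iff hden2.ne']
      linarith [E2]
    rw [heq]
    ring

private lemma part_b1 (X Y : ℝ → ℝ → ℝ)
    (hXY : ∀ C ρ : ℝ, 0 ≤ C → 0 < ρ → ρ < 1 → solveSysC C ρ (X C ρ) (Y C ρ))
    (C : ℝ) (hC : 0 ≤ C) (hC5 : C < Real.log 5) :
    Tendsto (X C) (𝓝[>] 0) (𝓝 (10 * Real.exp (-C) / (5 * Real.exp (-C) - 1))) ∧
    Tendsto (Y C) (𝓝[>] 0) (𝓝 (5 / 2)) := by
  set k := Real.exp (-C) with hkdef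
  have hk0 : 0 < k := Real.exp_pos _
  have hk1 : k ≤ 1 := Real.exp_le_one_iff.2 (by linarith)
  have hk5 : 1/5 < k := by
    have h := Real.exp_lt_exp.2 (neg_lt_neg hC5)
    rwa [Real.exp_neg, Real.exp_log (by norm_num : (0:ℝ) < 5), ← one_div] at h
  have h5k1 : (0:ℝ) < 5 * k - 1 := by linarith
  have hmem : Set.Ioo (0:ℝ) 1 ∈ 𝓝[>] (0:ℝ) :=
    Ioo_mem_nhdsGT_of_mem (by constructor <;> norm_num)
  have key : ∀ ρ : ℝ, 0 < ρ → ρ < 1 →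
      0 < X C ρ - 2 ∧ 0 < Y C ρ - 2 ∧
      ρ * Real.log (X C ρ - 2) + (1 - ρ) * Real.log (Y C ρ - 2) = -Real.log 2 ∧
      (Y C ρ - 2) * ((1 - k) * (X C ρ - 2) + 2) = 2 * k * (X C ρ - 2) :=
    fun ρ h0 h1 => sys_facts (hXY C ρ hC h0 h1)
  -- L = log (2 / (5k-1)) is an upper bound for log a
  set L := Real.log (2 / (5 * k - 1)) with hLdef
  have habd : ∀ ρ : ℝ, 0 < ρ → ρ < 1 → X C ρ - 2 ≤ 2 / (5 * k - 1) := by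
    intro ρ h0 h1
    obtain ⟨ha, hb, E1, E2⟩ := key ρ h0 h1
    obtain ⟨hla, hlb, ha2, hb2, hd, hkey⟩ := derived_facts ha hb hk0 hk1 h0 h1 E1 E2
    -- a * d = 2b with d ≥ (5k-1)/2, b ≤ 1/2
    have hd2 : (5 * k - 1) / 2 ≤ 2 * k - (1 - k) * (Y C ρ - 2) := by
      nlinarith [mul_le_mul_of_nonneg_left hb2 (by linarith : (0:ℝ) ≤ 1 - k)]
    rw [le_div_iff₀ h5k1]
    nlinarith [hkey, mul_le_mul_of_nonneg_left hd2 ha.le]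
  -- squeeze log (Y - 2)
  have hhi : ∀ᶠ ρ in 𝓝[>] (0:ℝ), Real.log (Y C ρ - 2) ≤ -Real.log 2 := by
    filter_upwards [hmem] with ρ hρ
    obtain ⟨ha, hb, E1, E2⟩ := key ρ hρ.1 hρ.2
    exact (derived_facts ha hb hk0 hk1 hρ.1 hρ.2 E1 E2).2.1
  have hlo : ∀ᶠ ρ in 𝓝[>] (0:ℝ),
      (-Real.log 2 - ρ * L) / (1 - ρ) ≤ Real.log (Y C ρ - 2) := by
    filter_upwards [hmem] with ρ hρ
    obtain ⟨ha, hb, E1, E2⟩ := key ρ hρ.1 hρ.2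
    have hla2 : Real.log (X C ρ - 2) ≤ L :=
      Real.log_le_log ha (habd ρ hρ.1 hρ.2)
    have hρ1 : ρ < 1 := hρ.2
    rw [div_le_iff₀ (by linarith : (0:ℝ) < 1 - ρ)]
    linarith [mul_le_mul_of_nonneg_left hla2 hρ.1.le, E1]
  have hup : Tendsto (fun ρ : ℝ => (-Real.log 2 - ρ * L) / (1 - ρ))
      (𝓝[>] (0:ℝ)) (𝓝 (-Real.log 2)) := by
    have h1t : Tendsto (fun ρ : ℝ => (-Real.log 2 - ρ * L) / (1 - ρ))
        (𝓝 (0:ℝ)) (𝓝 ((-Real.log 2 - 0 * L) / (1 - 0))) :=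
      Tendsto.div (tendsto_const_nhds.sub (tendsto_id.mul tendsto_const_nhds))
        (tendsto_const_nhds.sub tendsto_id) (by norm_num)
    have hv : (-Real.log 2 - 0 * L) / (1 - 0) = -Real.log 2 := by norm_num
    rw [hv] at h1t
    exact h1t.mono_left nhdsWithin_le_nhds
  have hlogbt : Tendsto (fun ρ => Real.log (Y C ρ - 2)) (𝓝[>] (0:ℝ)) (𝓝 (-Real.log 2)) :=
    tendsto_of_tendsto_of_tendsto_of_le_of_le' hup tendsto_const_nhds hlo hhi
  have hB : Tendsto (fun ρ => Y C ρ - 2) (𝓝[>] (0:ℝ)) (𝓝 (1/2)) := by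
    have h2 := (Real.continuous_exp.tendsto _).comp hlogbt
    have hval : Real.exp (-Real.log 2) = 1/2 := by
      rw [Real.exp_neg, Real.exp_log two_pos]; norm_num
    rw [hval] at h2
    refine h2.congr' ?_
    filter_upwards [hmem] with ρ hρ
    obtain ⟨_, hb, _, _⟩ := key ρ hρ.1 hρ.2
    exact Real.exp_log hb
  constructor
  · -- X tends to 10k/(5k-1)
    have hden : (0:ℝ) < 2 * k - (1 - k) * (1/2) := by linarith
    have hXfun : Tendsto (fun ρ => 2 * (Y C ρ - 2) / (2 * k - (1 - k) * (Y C ρ - 2)) + 2)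
        (𝓝[>] (0:ℝ)) (𝓝 (2 * (1/2) / (2 * k - (1 - k) * (1/2)) + 2)) := by
      apply Tendsto.add_const
      exact Tendsto.div (tendsto_const_nhds.mul hB)
        (tendsto_const_nhds.sub (tendsto_const_nhds.mul hB)) hden.ne'
    have hval : 2 * (1/2) / (2 * k - (1 - k) * (1/2)) + 2 = 10 * k / (5 * k - 1) := by
      rw [div_add' _ _ _ hden.ne', div_eq_div_iff hden.ne' h5k1.ne']
      ring
    rw [hval] at hXfun
    refine hXfun.congr' ?_
    filter_upwards [hmem] with ρ hρ
    obtain ⟨ha, hb, E1, E2⟩ := key ρ hρ.1 hρ.2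
    obtain ⟨hla, hlb, ha2, hb2, hd, hkey⟩ := derived_facts ha hb hk0 hk1 hρ.1 hρ.2 E1 E2
    have heq : 2 * (Y C ρ - 2) / (2 * k - (1 - k) * (Y C ρ - 2)) = X C ρ - 2 := by
      rw [div_eq_iff hd.ne']
      linarith [hkey]
    rw [heq]
    ring
  · have h3 := hB.add_const 2
    have h52 : (1:ℝ)/2 + 2 = 5/2 := by norm_num
    rw [h52] at h3
    exact h3.congr (fun ρ => by ring)

private lemma part_b2 (X Y : ℝ → ℝ → ℝ)
    (hXY : ∀ C ρ : ℝ, 0 ≤ C → 0 < ρ → ρ < 1 → solveSysC C ρ (X C ρ) (Y C ρ))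
    (C : ℝ) (hC5 : Real.log 5 ≤ C) :
    Tendsto (X C) (𝓝[>] 0) atTop ∧
    Tendsto (Y C) (𝓝[>] 0) (𝓝 (2 / (1 - Real.exp (-C)))) := by
  have hlog5 : (0:ℝ) < Real.log 5 := Real.log_pos (by norm_num)
  have hC : 0 ≤ C := le_trans hlog5.le hC5
  set k := Real.exp (-C) with hkdef
  have hk0 : 0 < k := Real.exp_pos _
  have hk1 : k ≤ 1 := Real.exp_le_one_iff.2 (by linarith)
  have hk5 : k ≤ 1/5 := by
    have h := Real.exp_le_exp.2 (neg_le_neg hC5)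
    rwa [Real.exp_neg (Real.log 5), Real.exp_log (by norm_num : (0:ℝ) < 5), ← one_div] at h
  have h1k : (0:ℝ) < 1 - k := by linarith
  set bs := 2 * k / (1 - k) with hbsdef
  have hbs0 : 0 < bs := by positivity
  have hbs2 : bs ≤ 1/2 := by
    rw [hbsdef, div_le_iff₀ h1k]; linarith
  have hmem : Set.Ioo (0:ℝ) 1 ∈ 𝓝[>] (0:ℝ) :=
    Ioo_mem_nhdsGT_of_mem (by constructor <;> norm_num)
  have key : ∀ ρ : ℝ, 0 < ρ → ρ < 1 →
      0 < X C ρ - 2 ∧ 0 < Y C ρ - 2 ∧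
      ρ * Real.log (X C ρ - 2) + (1 - ρ) * Real.log (Y C ρ - 2) = -Real.log 2 ∧
      (Y C ρ - 2) * ((1 - k) * (X C ρ - 2) + 2) = 2 * k * (X C ρ - 2) :=
    fun ρ h0 h1 => sys_facts (hXY C ρ hC h0 h1)
  -- b < bs always
  have hblt : ∀ ρ : ℝ, 0 < ρ → ρ < 1 → Y C ρ - 2 < bs := by
    intro ρ h0 h1
    obtain ⟨ha, hb, E1, E2⟩ := key ρ h0 h1
    rw [hbsdef, lt_div_iff₀ h1k]
    nlinarith [E2, ha, hb]
  -- main: b → bs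
  have hB : Tendsto (fun ρ => Y C ρ - 2) (𝓝[>] (0:ℝ)) (𝓝 bs) := by
    rw [tendsto_order]
    constructor
    · intro c hc
      rcases le_or_gt c 0 with hc0 | hc0
      · filter_upwards [hmem] with ρ hρ
        obtain ⟨_, hb, _, _⟩ := key ρ hρ.1 hρ.2
        linarith
      · -- 0 < c < bs
        have hdc : (0:ℝ) < 2 * k - (1 - k) * c := by
          have : (1 - k) * c < (1 - k) * bs := by
            exact mul_lt_mul_of_pos_left hc h1k
          rw [hbsdef] at this
          rw [mul_div_cancel₀ _ h1k.ne'] at this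
          linarith
        have hlc : Real.log c < -Real.log 2 := by
          have h1 : Real.log c < Real.log (1/2) :=
            Real.log_lt_log hc0 (by linarith)
          rwa [one_div, Real.log_inv] at h1
        -- h_ρ(c) < -log 2 eventually
        have htc : Tendsto (fun ρ : ℝ => ρ * Real.log (2 * c / (2 * k - (1 - k) * c))
            + (1 - ρ) * Real.log c) (𝓝[>] (0:ℝ))
            (𝓝 (0 * Real.log (2 * c / (2 * k - (1 - k) * c)) + (1 - 0) * Real.log c)) := by
          refine Tendsto.mono_left ?_ nhdsWithin_le_nhds
          exact (tendsto_id.mul tendsto_const_nhds).add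
            ((tendsto_const_nhds.sub tendsto_id).mul tendsto_const_nhds)
        have hval : 0 * Real.log (2 * c / (2 * k - (1 - k) * c)) + (1 - 0) * Real.log c
            = Real.log c := by ring
        rw [hval] at htc
        have hev := htc.eventually_lt_const hlc
        filter_upwards [hmem, hev] with ρ hρ hlt
        obtain ⟨ha, hb, E1, E2⟩ := key ρ hρ.1 hρ.2
        obtain ⟨hla, hlb, ha2, hb2, hd, hkey⟩ := derived_facts ha hb hk0 hk1 hρ.1 hρ.2 E1 E2
        by_contra hcb
        push_neg at hcb  -- Y C ρ - 2 ≤ c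
        -- a * (2k - (1-k)c) ≤ a * (2k - (1-k)b) = 2b ≤ 2c
        have h1' : (X C ρ - 2) * (2 * k - (1 - k) * c) ≤ 2 * c := by
          nlinarith [hkey, mul_le_mul_of_nonneg_left hcb
              (mul_nonneg h1k.le ha.le), hb]
        have h2' : X C ρ - 2 ≤ 2 * c / (2 * k - (1 - k) * c) :=
          (le_div_iff₀ hdc).2 h1'
        have hla' : Real.log (X C ρ - 2) ≤ Real.log (2 * c / (2 * k - (1 - k) * c)) :=
          Real.log_le_log ha h2'
        have hlb' : Real.log (Y C ρ - 2) ≤ Real.log c :=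
          Real.log_le_log hb hcb
        have hρ1 : ρ < 1 := hρ.2
        have c1 := mul_le_mul_of_nonneg_left hla' hρ.1.le
        have c2 := mul_le_mul_of_nonneg_left hlb' (by linarith : (0:ℝ) ≤ 1 - ρ)
        linarith [E1]
    · intro c hc
      filter_upwards [hmem] with ρ hρ
      exact lt_trans (hblt ρ hρ.1 hρ.2) hc
  constructor
  · -- X → ∞
    have hdt : Tendsto (fun ρ => 2 * k - (1 - k) * (Y C ρ - 2)) (𝓝[>] (0:ℝ))
        (𝓝 (2 * k - (1 - k) * bs)) :=
      tendsto_const_nhds.sub (tendsto_const_nhds.mul hB)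
    have hval : 2 * k - (1 - k) * bs = 0 := by
      rw [hbsdef, mul_div_cancel₀ _ h1k.ne']; ring
    rw [hval] at hdt
    have hdt' : Tendsto (fun ρ => 2 * k - (1 - k) * (Y C ρ - 2)) (𝓝[>] (0:ℝ)) (𝓝[>] (0:ℝ)) := by
      rw [tendsto_nhdsWithin_iff]
      refine ⟨hdt, ?_⟩
      filter_upwards [hmem] with ρ hρ
      obtain ⟨ha, hb, E1, E2⟩ := key ρ hρ.1 hρ.2
      obtain ⟨_, _, _, _, hd, _⟩ := derived_facts ha hb hk0 hk1 hρ.1 hρ.2 E1 E2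
      exact hd
    have hinv : Tendsto (fun ρ => (2 * k - (1 - k) * (Y C ρ - 2))⁻¹) (𝓝[>] (0:ℝ)) atTop :=
      tendsto_inv_nhdsGT_zero.comp hdt'
    have hmul : Tendsto (fun ρ => (2 * (Y C ρ - 2)) * (2 * k - (1 - k) * (Y C ρ - 2))⁻¹)
        (𝓝[>] (0:ℝ)) atTop :=
      Tendsto.pos_mul_atTop (by positivity : (0:ℝ) < 2 * bs) (tendsto_const_nhds.mul hB) hinv
    have hXat : Tendsto (fun ρ => (2 * (Y C ρ - 2)) * (2 * k - (1 - k) * (Y C ρ - 2))⁻¹ + 2)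
        (𝓝[>] (0:ℝ)) atTop := tendsto_atTop_add_const_right _ 2 hmul
    refine hXat.congr' ?_
    filter_upwards [hmem] with ρ hρ
    obtain ⟨ha, hb, E1, E2⟩ := key ρ hρ.1 hρ.2
    obtain ⟨_, _, _, _, hd, hkey⟩ := derived_facts ha hb hk0 hk1 hρ.1 hρ.2 E1 E2
    have heq : (2 * (Y C ρ - 2)) * (2 * k - (1 - k) * (Y C ρ - 2))⁻¹ = X C ρ - 2 := by
      rw [← div_eq_mul_inv, div_eq_iff hd.ne']
      linarith [hkey]
    rw [heq]; ring
  · -- Y → 2/(1-k)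
    have h3 := hB.add_const 2
    have hval : bs + 2 = 2 / (1 - k) := by
      rw [hbsdef, div_add' _ _ _ h1k.ne']
      ring_nf
    rw [hval] at h3
    exact h3.congr (fun ρ => by ring)

private lemma part_c (X Y : ℝ → ℝ → ℝ)
    (hXY : ∀ C ρ : ℝ, 0 ≤ C → 0 < ρ → ρ < 1 → solveSysC C ρ (X C ρ) (Y C ρ))
    (ρ : ℝ) (h0 : 0 < ρ) (h1 : ρ < 1) :
    Tendsto (fun C => X C ρ) atTop atTop ∧
    Tendsto (fun C => Y C ρ) atTop (𝓝 2) := by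
  have hmem : ∀ᶠ C in (atTop : Filter ℝ), 1 ≤ C := eventually_ge_atTop 1
  have key : ∀ C : ℝ, 1 ≤ C →
      0 < X C ρ - 2 ∧ 0 < Y C ρ - 2 ∧
      ρ * Real.log (X C ρ - 2) + (1 - ρ) * Real.log (Y C ρ - 2) = -Real.log 2 ∧
      (Y C ρ - 2) * ((1 - Real.exp (-C)) * (X C ρ - 2) + 2)
        = 2 * Real.exp (-C) * (X C ρ - 2) :=
    fun C hc => sys_facts (hXY C ρ (by linarith) h0 h1)
  -- b ≤ 4 exp(-C) eventually
  have hbup : ∀ᶠ C in (atTop : Filter ℝ), Y C ρ - 2 ≤ 4 * Real.exp (-C) := by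
    filter_upwards [hmem] with C hc
    obtain ⟨ha, hb, E1, E2⟩ := key C hc
    have hk0 : 0 < Real.exp (-C) := Real.exp_pos _
    have hk2 : Real.exp (-C) ≤ 1/2 := by
      have h2e : (2:ℝ) ≤ Real.exp 1 := by
        have := Real.add_one_le_exp 1
        linarith
      have := Real.exp_le_exp.2 (neg_le_neg hc)
      have h2 : Real.exp (-1 : ℝ) ≤ 1/2 := by
        rw [Real.exp_neg]
        rw [inv_le_comm₀ (Real.exp_pos 1) (by norm_num)]
        linarith
      linarith
    -- from E2 : b(1-k)a + 2b = 2ka  with a > 0 get b(1-k) < 2k, and 1-k ≥ 1/2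
    have hblt : (Y C ρ - 2) * (1 - Real.exp (-C)) < 2 * Real.exp (-C) := by
      nlinarith [E2, ha, hb, mul_pos ha hb]
    nlinarith [hblt, hb]
  have hb0 : ∀ᶠ C in (atTop : Filter ℝ), 0 < Y C ρ - 2 := by
    filter_upwards [hmem] with C hc
    exact (key C hc).2.1
  have h4exp : Tendsto (fun C : ℝ => 4 * Real.exp (-C)) atTop (𝓝 0) := by
    have h := Real.tendsto_exp_atBot.comp tendsto_neg_atTop_atBot
    have h2 := h.const_mul (4:ℝ)
    simpa using h2
  have hBt : Tendsto (fun C => Y C ρ - 2) atTop (𝓝 0) := by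
    refine tendsto_of_tendsto_of_tendsto_of_le_of_le' tendsto_const_nhds h4exp ?_ hbup
    filter_upwards [hb0] with C hc using hc.le
  have hY : Tendsto (fun C => Y C ρ) atTop (𝓝 2) := by
    have h3 := hBt.add_const 2
    norm_num at h3
    exact h3.congr (fun C => by ring)
  refine ⟨?_, hY⟩
  -- log b → -∞
  have hBt' : Tendsto (fun C => Y C ρ - 2) atTop (𝓝[>] (0:ℝ)) := by
    rw [tendsto_nhdsWithin_iff]; exact ⟨hBt, hb0⟩
  have hlogb : Tendsto (fun C => Real.log (Y C ρ - 2)) atTop atBot :=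
    Real.tendsto_log_nhdsGT_zero.comp hBt'
  -- log a = (-log 2 - (1-ρ) log b)/ρ → ∞
  have hneg : Tendsto (fun C => -Real.log 2 - (1 - ρ) * Real.log (Y C ρ - 2)) atTop atTop := by
    apply tendsto_atTop_add_const_left
    have h2 : Tendsto (fun C => (1 - ρ) * Real.log (Y C ρ - 2)) atTop atBot :=
      hlogb.const_mul_atBot (by linarith)
    exact tendsto_neg_atBot_atTop.comp h2
  have hloga : Tendsto (fun C => Real.log (X C ρ - 2)) atTop atTop := by
    have hdiv : Tendsto (fun C => (-Real.log 2 - (1 - ρ) * Real.log (Y C ρ - 2)) / ρ)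
        atTop atTop := hneg.atTop_div_const h0
    refine hdiv.congr' ?_
    filter_upwards [hmem] with C hc
    obtain ⟨ha, hb, E1, E2⟩ := key C hc
    field_simp
    linarith [E1]
  have hA : Tendsto (fun C => X C ρ - 2) atTop atTop := by
    have h2 := Real.tendsto_exp_atTop.comp hloga
    refine h2.congr' ?_
    filter_upwards [hmem] with C hc
    exact Real.exp_log (key C hc).1
  have h3 := tendsto_atTop_add_const_right atTop 2 hA
  refine h3.congr (fun C => by ring)

/-- Let `X C ρ = x̄(C,ρ)` and `Y C ρ = ȳ(C,ρ)` be the unique maximisers of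
`F(α,β;ρ)` with `C = α−β ≥ 0`, i.e. the solutions of the characterising system.
(a) For every `C ≥ 0`: as `ρ ↑ 1`, `x̄(C,ρ) → 5/2` and `ȳ(C,ρ) → 10/(5−e^{−C})`.
(b) As `ρ ↓ 0`: if `0 ≤ C < log 5` then `x̄(C,ρ) → 10e^{−C}/(5e^{−C}−1)` and
`ȳ(C,ρ) → 5/2`, while if `C ≥ log 5` then `x̄(C,ρ) → ∞` and
`ȳ(C,ρ) → 2/(1−e^{−C})`.
(c) For every `ρ ∈ (0,1)`: as `C → ∞`, `x̄(C,ρ) → ∞` and `ȳ(C,ρ) → 2`. -/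
theorem stmt17 (X Y : ℝ → ℝ → ℝ)
    (hXY : ∀ C ρ : ℝ, 0 ≤ C → 0 < ρ → ρ < 1 → solveSysC C ρ (X C ρ) (Y C ρ)) :
    (∀ C : ℝ, 0 ≤ C →
      Tendsto (X C) (𝓝[<] 1) (𝓝 (5 / 2)) ∧
      Tendsto (Y C) (𝓝[<] 1) (𝓝 (10 / (5 - Real.exp (-C))))) ∧
    (∀ C : ℝ, 0 ≤ C → C < Real.log 5 →
      Tendsto (X C) (𝓝[>] 0) (𝓝 (10 * Real.exp (-C) / (5 * Real.exp (-C) - 1))) ∧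
      Tendsto (Y C) (𝓝[>] 0) (𝓝 (5 / 2))) ∧
    (∀ C : ℝ, Real.log 5 ≤ C →
      Tendsto (X C) (𝓝[>] 0) atTop ∧
      Tendsto (Y C) (𝓝[>] 0) (𝓝 (2 / (1 - Real.exp (-C))))) ∧
    (∀ ρ : ℝ, 0 < ρ → ρ < 1 →
      Tendsto (fun C => X C ρ) atTop atTop ∧
      Tendsto (fun C => Y C ρ) atTop (𝓝 2)) :=
  ⟨fun C hC => part_a X Y hXY C hC,
   fun C hC hC5 => part_b1 X Y hXY C hC hC5,
   fun C hC5 => part_b2 X Y hXY C hC5,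
   fun ρ h0 h1 => part_c X Y hXY ρ h0 h1⟩
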